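/- Let N ≥ 1 and let λ : Fin N → ℝ be strictly positive, with modified Rényi entropy S̃(n) = log(Σ_k λ_k^n) − n·(Σ_k λ_k^n log λ_k)/(Σ_k λ_k^n). Then for every n > 0 the derivative satisfies S̃'(n) ≤ 0, and S̃'(n) = 0 if and only if the spectrum is flat, i.e. λ_k = λ_l for all indices k, l. -/

import Mathlib

open scoped BigOperators

/-- The modified Rényi entropy `S̃(n) = log(Σ_k λ_k^n) − n·(Σ_k λ_k^n log λ_k)/(Σ_k λ_k^n)`
of a strictly positive vector `λ`, as a function of a real variable `n`. -/
noncomputable def modifiedRenyi {N : ℕ} (lam : Fin N → ℝ) (n : ℝ) : ℝ :=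
  Real.log (∑ k, lam k ^ n) -
    n * (∑ k, lam k ^ n * Real.log (lam k)) / (∑ k, lam k ^ n)

/-!
Writing `Z = Σ λ_k^n`, `A = Σ λ_k^n log λ_k` and `B = Σ λ_k^n (log λ_k)^2`, we have `Z' = A` and
`A' = B`, so the two `A/Z` terms cancel and `S̃'(n) = -n (Z B - A^2) / Z^2`. The numerator
`Z B - A^2` is `Z^2` times the variance of `log λ` under the Gibbs weights `λ_k^n / Z`, and the
Lagrange identity `Σ_k Σ_l w_k w_l (x_k - x_l)^2 = 2 ((Σ w)(Σ w x^2) - (Σ w x)^2)` shows that it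
is nonnegative and vanishes exactly when `log λ`, hence `λ`, is constant.
-/

open Finset Real

section WeightedCauchySchwarz

variable {ι : Type*} [Fintype ι] (w x : ι → ℝ)

theorem sum_sum_mul_mul_sub_sq :
    ∑ k, ∑ l, w k * w l * (x k - x l) ^ 2 =
      2 * ((∑ k, w k) * (∑ k, w k * x k ^ 2) - (∑ k, w k * x k) ^ 2) := by
  calc ∑ k, ∑ l, w k * w l * (x k - x l) ^ 2
      = ∑ k, ∑ l, (w k * (w l * x l ^ 2) + w k * x k ^ 2 * w l
          - 2 * (w k * x k * (w l * x l))) :=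
        sum_congr rfl fun k _ => sum_congr rfl fun l _ => by ring
    _ = 2 * ((∑ k, w k) * (∑ k, w k * x k ^ 2) - (∑ k, w k * x k) ^ 2) := by
        simp only [sum_add_distrib, sum_sub_distrib, ← mul_sum, ← sum_mul]
        ring

theorem sq_sum_mul_le_sum_mul_sum_mul_sq (hw : ∀ k, 0 ≤ w k) :
    (∑ k, w k * x k) ^ 2 ≤ (∑ k, w k) * ∑ k, w k * x k ^ 2 := by
  have : 0 ≤ ∑ k, ∑ l, w k * w l * (x k - x l) ^ 2 :=
    sum_nonneg fun k _ => sum_nonneg fun l _ => mul_nonneg (mul_nonneg (hw k) (hw l)) (sq_nonneg _)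
  linarith [sum_sum_mul_mul_sub_sq w x]

theorem sq_sum_mul_eq_sum_mul_sum_mul_sq_iff (hw : ∀ k, 0 < w k) :
    (∑ k, w k * x k) ^ 2 = (∑ k, w k) * (∑ k, w k * x k ^ 2) ↔ ∀ k l, x k = x l := by
  have hterm : ∀ k l, 0 ≤ w k * w l * (x k - x l) ^ 2 := fun k l =>
    mul_nonneg (mul_pos (hw k) (hw l)).le (sq_nonneg _)
  rw [eq_comm, ← sub_eq_zero, ← mul_eq_zero_iff_left two_ne_zero, ← sum_sum_mul_mul_sub_sq,
    sum_eq_zero_iff_of_nonneg fun k _ => sum_nonneg fun l _ => hterm k l]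
  simp only [sum_eq_zero_iff_of_nonneg fun l _ => hterm _ l, mem_univ, true_implies, mul_eq_zero,
    (mul_pos (hw _) (hw _)).ne', false_or, pow_eq_zero_iff two_ne_zero, sub_eq_zero]

end WeightedCauchySchwarz

theorem hasDerivAt_sum_rpow_mul {ι : Type*} [Fintype ι] {a : ι → ℝ} (ha : ∀ k, 0 < a k)
    (c : ι → ℝ) (n : ℝ) :
    HasDerivAt (fun m => ∑ k, a k ^ m * c k) (∑ k, a k ^ n * log (a k) * c k) n :=
  HasDerivAt.fun_sum fun k _ => ((hasStrictDerivAt_const_rpow (ha k) n).hasDerivAt).mul_const _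

theorem hasDerivAt_modifiedRenyi {N : ℕ} [Nonempty (Fin N)] {lam : Fin N → ℝ}
    (hpos : ∀ k, 0 < lam k) (n : ℝ) :
    HasDerivAt (modifiedRenyi lam)
      (-n * ((∑ k, lam k ^ n) * (∑ k, lam k ^ n * log (lam k) ^ 2)
        - (∑ k, lam k ^ n * log (lam k)) ^ 2) / (∑ k, lam k ^ n) ^ 2) n := by
  have hZ : HasDerivAt (fun m => ∑ k, lam k ^ m) (∑ k, lam k ^ n * log (lam k)) n := by
    simpa using hasDerivAt_sum_rpow_mul hpos 1 n
  have hA : HasDerivAt (fun m => ∑ k, lam k ^ m * log (lam k))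
      (∑ k, lam k ^ n * log (lam k) ^ 2) n := by
    simpa only [Function.comp_apply, mul_assoc, ← sq] using
      hasDerivAt_sum_rpow_mul hpos (log ∘ lam) n
  have hZpos : 0 < ∑ k, lam k ^ n := sum_pos (fun k _ => rpow_pos_of_pos (hpos k) n) univ_nonempty
  refine ((hZ.log hZpos.ne').sub (((hasDerivAt_id' n).fun_mul hA).div hZ hZpos.ne')).congr_deriv ?_
  field_simp
  ring

/-- For a strictly positive vector `λ : Fin N → ℝ` (`N ≥ 1`) and every `n > 0`,
the derivative of the modified Rényi entropy satisfies `S̃'(n) ≤ 0`, with equality if and only if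
the spectrum is flat, i.e. `λ_k = λ_l` for all `k, l`. -/
theorem deriv_modifiedRenyi_nonpos_and_eq_zero_iff_flat {N : ℕ} (hN : 1 ≤ N)
    (lam : Fin N → ℝ) (hpos : ∀ k, 0 < lam k) (n : ℝ) (hn : 0 < n) :
    deriv (modifiedRenyi lam) n ≤ 0 ∧
      (deriv (modifiedRenyi lam) n = 0 ↔ ∀ k l, lam k = lam l) := by
  have : Nonempty (Fin N) := Fin.pos_iff_nonempty.mp hN
  rw [(hasDerivAt_modifiedRenyi hpos n).deriv]
  have hw : ∀ k, 0 < lam k ^ n := fun k => rpow_pos_of_pos (hpos k) n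
  have hZ : 0 < ∑ k, lam k ^ n := sum_pos (fun k _ => hw k) univ_nonempty
  have hCS := sq_sum_mul_le_sum_mul_sum_mul_sq _ (log ∘ lam) fun k => (hw k).le
  have hflat := sq_sum_mul_eq_sum_mul_sum_mul_sq_iff _ (log ∘ lam) hw
  simp only [Function.comp_apply] at hCS hflat
  refine ⟨div_nonpos_of_nonpos_of_nonneg (by nlinarith) (by positivity), ?_⟩
  rw [div_eq_zero_iff, or_iff_left (by positivity), neg_mul, neg_eq_zero,
    mul_eq_zero, or_iff_right hn.ne', sub_eq_zero, eq_comm, hflat]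
  exact forall₂_congr fun k l => log_injOn_pos.eq_iff (hpos k) (hpos l)
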